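/- For every real number ε > 0, the periodic schedule |112112113| (i.e., S(t) = 1 if t ≡ 0, 1, 3, 4, 6, 7 (mod 9), S(t) = 2 if t ≡ 2, 5 (mod 9), and S(t) = 3 if t ≡ 8 (mod 9)) is valid for the real-valued pinwheel instance (3/2, 5 + ε, 9). -/

import Mathlib

/-- A schedule `S : ℤ → Fin k` is valid for the real-valued pinwheel instance
`a : Fin k → ℝ` if for every task `i`, every positive integer `l`, and every
integer `m`, task `i` is performed at least `l` times on the days
`t ∈ [m, m + ⌈l * a i⌉)`. -/
def PinValid {k : ℕ} (a : Fin k → ℝ) (S : ℤ → Fin k) : Prop :=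
  ∀ i : Fin k, ∀ l : ℕ, 0 < l → ∀ m : ℤ,
    (l : ℕ) ≤ ((Finset.Ico m (m + ⌈(l : ℝ) * a i⌉)).filter (fun t => S t = i)).card

/-- A real-valued pinwheel instance is schedulable if some schedule is valid for it. -/
def PinSchedulable {k : ℕ} (a : Fin k → ℝ) : Prop := ∃ S : ℤ → Fin k, PinValid a S

/-- The periodic schedule `|112112113|`. -/
def S112112113 : ℤ → Fin 3 := fun t =>
  if t % 9 = 8 then 2 else if t % 9 = 2 ∨ t % 9 = 5 then 1 else 0

lemma S_eq_two {t : ℤ} (h : t % 9 = 8) : S112112113 t = 2 := by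
  simp [S112112113, h]

lemma S_eq_one {t : ℤ} (h : t % 9 = 2 ∨ t % 9 = 5) : S112112113 t = 1 := by
  unfold S112112113
  rcases h with h | h <;> simp [h]

lemma S_ne_zero {t : ℤ} (h : ¬ S112112113 t = 0) : t % 3 = 2 := by
  unfold S112112113 at h
  split_ifs at h with h1 h2
  · omega
  · omega
  · exact absurd rfl h

lemma lb {P : ℤ → Prop} [inst : DecidablePred P] {m n : ℤ} {l : ℕ} (f : ℕ → ℤ)
    (hmem : ∀ j < l, P (f j) ∧ m ≤ f j ∧ f j < m + n)
    (hinj : ∀ j < l, ∀ j' < l, f j = f j' → j = j') :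
    l ≤ ((Finset.Ico m (m + n)).filter P).card := by
  have h := Finset.card_le_card_of_injOn (s := Finset.range l)
      (t := (Finset.Ico m (m + n)).filter P) f ?_ ?_
  · simpa using h
  · intro j hj
    rw [Finset.mem_coe, Finset.mem_range] at hj
    obtain ⟨h1, h2, h3⟩ := hmem j hj
    rw [Finset.mem_coe, Finset.mem_filter, Finset.mem_Ico]
    exact ⟨⟨h2, h3⟩, h1⟩
  · intro j hj j' hj' hf
    rw [Finset.coe_range, Set.mem_Iio] at hj hj'
    exact hinj j hj j' hj' hf

theorem valid_112112113 (ε : ℝ) (hε : 0 < ε) :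
    PinValid ![(3 : ℝ) / 2, 5 + ε, 9] S112112113 := by
  intro i l hl m
  fin_cases i
  · -- task 0 : a = 3/2
    show (l : ℕ) ≤ ((Finset.Ico m (m + ⌈(l : ℝ) * ((3 : ℝ) / 2)⌉)).filter
      (fun t => S112112113 t = 0)).card
    set n : ℤ := ⌈(l : ℝ) * ((3 : ℝ) / 2)⌉ with hn
    have h2n : 3 * (l : ℤ) ≤ 2 * n := by
      have h1 := Int.le_ceil ((l : ℝ) * ((3 : ℝ) / 2))
      rw [← hn] at h1
      have : (3 * (l : ℤ) : ℝ) ≤ (2 * n : ℤ) := by push_cast; linarith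
      exact_mod_cast this
    have hcard : (Finset.Ico m (m + n)).card = n.toNat := by
      rw [Int.card_Ico]; congr 1; omega
    have hsplit := Finset.card_filter_add_card_filter_not
      (s := Finset.Ico m (m + n)) (p := fun t => S112112113 t = 0)
    have hbad : ((Finset.Ico m (m + n)).filter (fun t => ¬ S112112113 t = 0)).card
        ≤ ((n + 2) / 3).toNat := by
      have h := Finset.card_le_card_of_injOn
        (s := (Finset.Ico m (m + n)).filter (fun t => ¬ S112112113 t = 0))
        (t := Finset.range ((n + 2) / 3).toNat) (fun t => ((t - m) / 3).toNat) ?_ ?_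
      · simpa using h
      · intro t ht
        rw [Finset.mem_coe, Finset.mem_filter, Finset.mem_Ico] at ht
        rw [Finset.mem_coe, Finset.mem_range]
        dsimp only
        omega
      · intro t ht t' ht' hf
        simp only [Finset.coe_filter, Finset.mem_Ico, Set.mem_setOf_eq] at ht ht'
        have e1 := S_ne_zero ht.2
        have e2 := S_ne_zero ht'.2
        obtain ⟨⟨a1, a2⟩, -⟩ := ht
        obtain ⟨⟨b1, b2⟩, -⟩ := ht'
        dsimp only at hf
        omega
    omega
  · -- task 1 : a = 5 + ε
    show (l : ℕ) ≤ ((Finset.Ico m (m + ⌈(l : ℝ) * (5 + ε)⌉)).filter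
      (fun t => S112112113 t = 1)).card
    set n : ℤ := ⌈(l : ℝ) * (5 + ε)⌉ with hn
    have hn5 : 5 * (l : ℤ) + 1 ≤ n := by
      have h1 : ((5 * (l : ℤ) : ℤ) : ℝ) < (l : ℝ) * (5 + ε) := by
        push_cast
        have : (0 : ℝ) < (l : ℝ) := by exact_mod_cast hl
        nlinarith
      have := Int.lt_ceil.mpr h1
      omega
    set k0 : ℤ := 2 * (m / 9) + (m % 9) / 3 with hk0
    have hk0a : m ≤ (9 * k0 + 4 - 3 * (k0 % 2)) / 2 := by omega
    have hk0b : (9 * (k0 - 1) + 4 - 3 * ((k0 - 1) % 2)) / 2 < m := by omega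
    apply lb (f := fun j => (9 * (k0 + (j : ℤ)) + 4 - 3 * ((k0 + (j : ℤ)) % 2)) / 2)
    · intro j hj
      have hjl : (j : ℤ) < (l : ℤ) := by exact_mod_cast hj
      refine ⟨S_eq_one (by omega), by omega, by omega⟩
    · intro j hj j' hj' hf
      have hjl : (j : ℤ) < (l : ℤ) := by exact_mod_cast hj
      have hjl' : (j' : ℤ) < (l : ℤ) := by exact_mod_cast hj'
      have : (j : ℤ) = (j' : ℤ) := by omega
      exact_mod_cast this
  · -- task 2 : a = 9
    show (l : ℕ) ≤ ((Finset.Ico m (m + ⌈(l : ℝ) * (9 : ℝ)⌉)).filter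
      (fun t => S112112113 t = 2)).card
    have h9 : ⌈(l : ℝ) * (9 : ℝ)⌉ = 9 * (l : ℤ) := by
      rw [show ((l : ℝ) * 9) = ((9 * (l : ℤ) : ℤ) : ℝ) by push_cast; ring, Int.ceil_intCast]
    rw [h9]
    apply lb (f := fun j => m + (8 - m) % 9 + 9 * (j : ℤ))
    · intro j hj
      have hjl : (j : ℤ) < (l : ℤ) := by exact_mod_cast hj
      refine ⟨S_eq_two (by omega), by omega, by omega⟩
    · intro j hj j' hj' hf
      have : (j : ℤ) = (j' : ℤ) := by omega
      exact_mod_cast this
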